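/- Let N = 2M with M ≥ 4, and let σ : ℤ/Nℤ → {−1, +1} be a configuration with exactly M sites of value +1 and M sites of value −1. Let p(σ) = #{i : σ(i) ≠ σ(i+1)} denote its number of interfaces, and call a site i isolated if σ(i−1) ≠ σ(i) and σ(i) ≠ σ(i+1). Then: (1) p(σ) is even; (2) if p(σ) = 2, then the set {i : σ(i) = +1} consists of M cyclically consecutive sites (a single cluster of M particles, and a single cluster of M holes); (3) if p(σ) > M, then σ has at least one isolated site; (4) for every even p with 4 ≤ p ≤ M, there exists such a configuration with exactly p interfaces possessing an isolated site, and there also exists one with exactly p interfaces possessing no isolated site. -/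

import Mathlib

/-!
The product of `σ i * σ (i + 1)` over the circle is `(∏ σ i) ^ 2 = 1`, and every interface
contributes a factor `-1`, so the number of interfaces is even. With two interfaces, walk from the
site just after a hole-to-particle interface: `σ` is constant up to the second interface and
constant after it, so the particles form a single arc, which then has length `M`. Without isolated
sites no two interfaces are adjacent, so the interface set `I` and its translate `I + 1` are
disjoint and `2 * #I ≤ N`. For `p = 2a + 2` interfaces, an alternating block `+-+-…` of length
`2a`, resp. a block `++--++--…` of length `4a`, followed by one run of particles and one run of
holes, gives a configuration with, resp. without, an isolated site.
-/

open Finset Function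

def interfaces {G α : Type*} [Add G] [One G] (σ : G → α) : Set G := {i | σ i ≠ σ (i + 1)}

@[simp]
theorem mem_interfaces {G α : Type*} [Add G] [One G] {σ : G → α} {i : G} :
    i ∈ interfaces σ ↔ σ i ≠ σ (i + 1) :=
  Iff.rfl

def IsIsolated {G α : Type*} [AddGroupWithOne G] (σ : G → α) (i : G) : Prop :=
  σ (i - 1) ≠ σ i ∧ σ i ≠ σ (i + 1)

theorem Nat.card_filter_range_mul_of_periodic {p : ℕ → Prop} [DecidablePred p] {c : ℕ}
    (hp : Periodic p c) (n : ℕ) : #{v ∈ range (c * n) | p v} = n * #{v ∈ range c | p v} := by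
  simp_rw [← Nat.count_eq_card_filter_range]
  induction n with
  | zero => simp
  | succ n ih =>
    rw [mul_add_one, Nat.count_add, ih, add_one_mul]
    congr 2
    funext k
    rw [add_comm, mul_comm]
    exact hp.nat_mul n k

theorem Nat.apply_eq_of_forall_succ_eq {α : Type*} (g : ℕ → α) {s e : ℕ}
    (h : ∀ t, s ≤ t → t < e → g (t + 1) = g t) :
    ∀ t, s ≤ t → t ≤ e → g t = g s := by
  intro t hst
  induction t, hst using Nat.le_induction with
  | base => intro; rfl
  | succ t hst ih => intro hte; rw [h t hst (by omega), ih (by omega)]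

theorem even_ncard_setOf_ne_comp_perm {α : Type*} [Fintype α] (f : α → ℤ)
    (hf : ∀ i, f i = 1 ∨ f i = -1) (e : Equiv.Perm α) :
    Even {i | f i ≠ f (e i)}.ncard := by
  have hsq : ∀ i, f i * f i = 1 := fun i => by rcases hf i with h | h <;> simp [h]
  have hprod : ∏ i, f i * f (e i) = 1 := by
    rw [prod_mul_distrib, Equiv.prod_comp e f, ← prod_mul_distrib]
    exact prod_eq_one fun i _ => hsq i
  have hterm : ∀ i, f i * f (e i) = if f i ≠ f (e i) then -1 else 1 := fun i => by
    rcases hf i with h | h <;> rcases hf (e i) with h' | h' <;> simp [h, h']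
  rw [prod_congr rfl fun i _ => hterm i, prod_ite, prod_const, prod_const_one, mul_one,
    neg_one_pow_eq_one_iff_even (by norm_num)] at hprod
  simpa [Set.ncard_eq_toFinset_card'] using hprod

theorem two_mul_ncard_interfaces_le {G α : Type*} [AddGroupWithOne G] [Finite G] (σ : G → α)
    (h : ∀ i, ¬IsIsolated σ i) : 2 * (interfaces σ).ncard ≤ Nat.card G := by
  have hdisj : Disjoint (interfaces σ) ((· + 1) '' interfaces σ) := by
    refine Set.disjoint_left.mpr ?_
    rintro _ hi ⟨i, hi', rfl⟩
    exact h (i + 1) ⟨by rwa [add_sub_cancel_right], hi⟩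
  calc 2 * (interfaces σ).ncard
      = (interfaces σ ∪ (· + 1) '' interfaces σ).ncard := by
        rw [Set.ncard_union_eq hdisj, Set.ncard_image_of_injective _ (add_left_injective 1)]
        ring
    _ ≤ Nat.card G := Set.ncard_le_card _

namespace ZMod

theorem add_natCast_inj {N : ℕ} (j : ZMod N) {s t : ℕ} (hs : s < N) (ht : t < N) :
    j + s = j + t ↔ s = t := by
  rw [add_right_inj]
  exact ⟨fun h => by simpa [val_cast_of_lt hs, val_cast_of_lt ht] using congrArg val h,
    congrArg _⟩

variable {N : ℕ} [NeZero N]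

theorem natCast_self_sub_one : ((N - 1 : ℕ) : ZMod N) = -1 := by
  rw [Nat.cast_pred (NeZero.pos N), natCast_self, zero_sub]

theorem val_add_one_eq_ite (i : ZMod N) :
    (i + 1).val = if i.val + 1 = N then 0 else i.val + 1 := by
  have : i + 1 = ((i.val + 1 : ℕ) : ZMod N) := by simp
  rw [this, val_natCast]
  split_ifs with h
  · rw [h, Nat.mod_self]
  · exact Nat.mod_eq_of_lt (by have := i.val_lt; omega)

theorem val_sub_one_eq_ite (i : ZMod N) :
    (i - 1).val = if i.val = 0 then N - 1 else i.val - 1 := by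
  have hN := NeZero.pos N
  split_ifs with h
  · rw [(val_eq_zero i).mp h, zero_sub, ← natCast_self_sub_one, val_cast_of_lt (by omega)]
  · have : i - 1 = ((i.val - 1 : ℕ) : ZMod N) := by simp [Nat.cast_pred (Nat.pos_of_ne_zero h)]
    rw [this, val_cast_of_lt (by have := i.val_lt; omega)]

theorem ncard_setOf_val (P : ℕ → Prop) [DecidablePred P] :
    {i : ZMod N | P i.val}.ncard = #{v ∈ range N | P v} := by
  have himage : ((range N).filter P : Set ℕ) = val '' {i : ZMod N | P i.val} := by
    ext v
    simp only [coe_filter, mem_range, Set.mem_ofPred_eq, Set.mem_image]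
    constructor
    · rintro ⟨hv, hP⟩
      exact ⟨v, by rwa [val_cast_of_lt hv], val_cast_of_lt hv⟩
    · rintro ⟨i, hP, rfl⟩
      exact ⟨i.val_lt, hP⟩
  rw [← Set.ncard_coe_finset, himage, Set.ncard_image_of_injective _ (val_injective N)]

theorem exists_ne_and_add_one_eq {α : Type*} {σ : ZMod N → α} {c : α} (hx : ∃ x, σ x = c)
    (hy : ∃ y, σ y ≠ c) : ∃ a, σ a ≠ c ∧ σ (a + 1) = c := by
  obtain ⟨x, hx⟩ := hx
  obtain ⟨y, hy⟩ := hy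
  by_contra! h
  have hwalk : ∀ n : ℕ, σ (y + n) ≠ c := by
    intro n
    induction n with
    | zero => simpa using hy
    | succ n ih => simpa [add_assoc] using h _ ih
  exact hwalk (x - y).val (by simpa using hx)

theorem apply_add_natCast_eq_iff_of_interfaces_eq_pair {α : Type*} {σ : ZMod N → α}
    {a b : ZMod N} (hab : a ≠ b) (hI : interfaces σ = {a, b}) {t : ℕ} (ht : t < N) :
    σ (a + 1 + t) = σ (a + 1) ↔ t ≤ (b - (a + 1)).val := by
  set j := a + 1
  set v := (b - j).val
  have hjb : j + v = b := by simp [v]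
  have hja : j + (N - 1 : ℕ) = a := by simp [j, natCast_self_sub_one]
  have hv : v < N - 1 := by
    have : v ≠ N - 1 := fun h => hab (by rw [← hja, ← hjb, h])
    have := val_lt (b - j)
    omega
  have hstep : ∀ s, s < N - 1 → s ≠ v → σ (j + (s + 1 : ℕ)) = σ (j + s) := by
    intro s hs hsv
    have hnot : j + s ∉ interfaces σ := by
      rw [hI]
      rintro (h | h)
      · exact absurd ((add_natCast_inj j (by omega) (by omega)).mp (h.trans hja.symm)) (by omega)
      · exact hsv ((add_natCast_inj j (by omega) (by omega)).mp (h.trans hjb.symm))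
    simpa [add_assoc, eq_comm] using hnot
  have hlow := Nat.apply_eq_of_forall_succ_eq (fun s => σ (j + s)) (s := 0) (e := v)
    (fun s _ hs => hstep s (by omega) (by omega))
  have hhigh := Nat.apply_eq_of_forall_succ_eq (fun s => σ (j + s)) (s := v + 1) (e := N - 1)
    (fun s hs hs' => hstep s hs' (by omega))
  have hjump : σ (j + (v + 1 : ℕ)) ≠ σ j := by
    have hb : b ∈ interfaces σ := by rw [hI]; exact Or.inr rfl
    have := hlow v (Nat.zero_le _) le_rfl
    simp only [Nat.cast_zero, add_zero] at this
    rw [← this, hjb]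
    simpa [← add_assoc, hjb] using (Ne.symm hb)
  constructor
  · intro h
    by_contra hvt
    exact hjump ((hhigh t (by omega) (by omega)).symm.trans (by simpa using h))
  · intro h
    simpa using hlow t (Nat.zero_le _) h

theorem exists_cluster_of_ncard_interfaces_eq_two {α : Type*} {σ : ZMod N → α} {c : α}
    {M : ℕ} (hM : 0 < M) (hMN : M < N) (hcard : {i | σ i = c}.ncard = M)
    (h2 : (interfaces σ).ncard = 2) : ∃ j, ∀ i, σ i = c ↔ ∃ t < M, i = j + t := by
  obtain ⟨a, ha, ha1⟩ := exists_ne_and_add_one_eq (σ := σ) (c := c)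
    (Set.nonempty_of_ncard_ne_zero (s := {i | σ i = c}) (by omega))
    (by
      by_contra! h
      have huniv : {i | σ i = c} = Set.univ := Set.eq_univ_of_forall h
      rw [huniv, Set.ncard_univ, Nat.card_zmod] at hcard
      omega)
  obtain ⟨b, hab, hI⟩ : ∃ b, a ≠ b ∧ interfaces σ = {a, b} := by
    obtain ⟨x, y, hxy, hI⟩ := Set.ncard_eq_two.mp h2
    have haI : a ∈ interfaces σ := by simp [ha, ha1]
    rw [hI] at haI
    rcases haI with rfl | rfl
    · exact ⟨y, hxy, hI⟩
    · exact ⟨x, hxy.symm, by rw [hI, Set.pair_comm]⟩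
  set v := (b - (a + 1)).val
  have hv : v < N := val_lt _
  have hcluster : {i | σ i = c} = (fun t : ℕ => a + 1 + t) '' Set.Iic v := by
    ext i
    constructor
    · intro hi
      refine ⟨(i - (a + 1)).val, ?_, by simp⟩
      rw [Set.mem_Iic, ← apply_add_natCast_eq_iff_of_interfaces_eq_pair hab hI (val_lt _)]
      simpa [ha1] using hi
    · rintro ⟨t, ht, rfl⟩
      rw [Set.mem_Iic] at ht
      exact ((apply_add_natCast_eq_iff_of_interfaces_eq_pair hab hI (by omega)).mpr ht).trans ha1
  have hvM : v + 1 = M := by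
    rw [← hcard, hcluster, Set.InjOn.ncard_image, Set.ncard_Iic_nat]
    intro s hs t ht hst
    rw [Set.mem_Iic] at hs ht
    exact (add_natCast_inj _ (by omega) (by omega)).mp hst
  refine ⟨a + 1, fun i => ?_⟩
  rw [show σ i = c ↔ i ∈ {i | σ i = c} from Iff.rfl, hcluster]
  simp [← hvM, eq_comm]

end ZMod

def configOfPred (N : ℕ) (Q : ℕ → Prop) [DecidablePred Q] (i : ZMod N) : ℤ :=
  if Q i.val then 1 else -1

section configOfPred

open ZMod

variable {N : ℕ} (Q : ℕ → Prop) [DecidablePred Q]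

theorem configOfPred_eq_one_or (i : ZMod N) :
    configOfPred N Q i = 1 ∨ configOfPred N Q i = -1 := by
  unfold configOfPred; split_ifs <;> simp

theorem configOfPred_ne_iff (i j : ZMod N) :
    configOfPred N Q i ≠ configOfPred N Q j ↔ ¬(Q i.val ↔ Q j.val) := by
  unfold configOfPred; split_ifs <;> simp_all

variable [NeZero N]

theorem ncard_configOfPred_eq_one :
    {i | configOfPred N Q i = 1}.ncard = #{v ∈ range N | Q v} := by
  simpa [configOfPred] using ncard_setOf_val Q

theorem ncard_interfaces_configOfPred :
    (interfaces (configOfPred N Q)).ncard =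
      #{v ∈ range N | ¬(Q v ↔ Q (if v + 1 = N then 0 else v + 1))} := by
  simp_rw [interfaces, configOfPred_ne_iff, val_add_one_eq_ite]
  exact ncard_setOf_val (fun v => ¬(Q v ↔ Q (if v + 1 = N then 0 else v + 1)))

theorem isIsolated_configOfPred_iff (i : ZMod N) :
    IsIsolated (configOfPred N Q) i ↔
      ¬(Q (if i.val = 0 then N - 1 else i.val - 1) ↔ Q i.val) ∧
        ¬(Q i.val ↔ Q (if i.val + 1 = N then 0 else i.val + 1)) := by
  rw [IsIsolated, configOfPred_ne_iff, configOfPred_ne_iff, val_sub_one_eq_ite,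
    val_add_one_eq_ite]

end configOfPred

theorem exists_config_with_isolated_site {M p : ℕ} (hp : Even p) (hp4 : 4 ≤ p)
    (hpM : p ≤ M) :
    ∃ σ : ZMod (2 * M) → ℤ, (∀ i, σ i = 1 ∨ σ i = -1) ∧ {i | σ i = 1}.ncard = M ∧
      (interfaces σ).ncard = p ∧ ∃ i, IsIsolated σ i := by
  obtain ⟨a, rfl, ha⟩ : ∃ a, p = 2 * a + 2 ∧ 1 ≤ a := by
    obtain ⟨k, rfl⟩ := hp
    exact ⟨k - 1, by omega, by omega⟩
  have : NeZero (2 * M) := ⟨by omega⟩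
  refine ⟨configOfPred (2 * M)
    (fun v => (v < 2 * a ∧ v % 2 = 0) ∨ (2 * a ≤ v ∧ v < M + a)),
    configOfPred_eq_one_or _, ?_, ?_, 0, ?_⟩
  · have hsplit :
        {v ∈ range (2 * M) | (v < 2 * a ∧ v % 2 = 0) ∨ (2 * a ≤ v ∧ v < M + a)} =
          {v ∈ range (2 * a) | v % 2 = 0} ∪ Ico (2 * a) (M + a) := by
      ext v; simp only [mem_filter, mem_range, mem_union, mem_Ico]; omega
    have hperiodic : Periodic (fun v => v % 2 = 0) 2 := by simp [Periodic]
    rw [ncard_configOfPred_eq_one, hsplit,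
      card_union_of_disjoint
        (disjoint_left.mpr (by simp only [mem_filter, mem_range, mem_Ico]; omega)),
      Nat.card_filter_range_mul_of_periodic hperiodic, Nat.card_Ico,
      show #{v ∈ range 2 | v % 2 = 0} = 1 from rfl]
    omega
  · rw [ncard_interfaces_configOfPred]
    calc _ = #(insert (2 * M - 1) (insert (M + a - 1) (range (2 * a)))) := by
          congr 1; ext v; simp only [mem_filter, mem_range, mem_insert]; split_ifs <;> omega
      _ = 2 * a + 2 := by
          rw [card_insert_of_notMem (by simp only [mem_insert, mem_range]; omega),
            card_insert_of_notMem (by simp only [mem_range]; omega), card_range]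
  · rw [isIsolated_configOfPred_iff, ZMod.val_zero, if_pos rfl, if_neg (by omega)]
    omega

theorem exists_config_without_isolated_site {M p : ℕ} (hp : Even p) (hp4 : 4 ≤ p)
    (hpM : p ≤ M) :
    ∃ σ : ZMod (2 * M) → ℤ, (∀ i, σ i = 1 ∨ σ i = -1) ∧ {i | σ i = 1}.ncard = M ∧
      (interfaces σ).ncard = p ∧ ¬∃ i, IsIsolated σ i := by
  obtain ⟨a, rfl, ha⟩ : ∃ a, p = 2 * a + 2 ∧ 1 ≤ a := by
    obtain ⟨k, rfl⟩ := hp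
    exact ⟨k - 1, by omega, by omega⟩
  have : NeZero (2 * M) := ⟨by omega⟩
  refine ⟨configOfPred (2 * M)
    (fun v => (v < 4 * a ∧ v % 4 < 2) ∨ (4 * a ≤ v ∧ v < M + 2 * a)),
    configOfPred_eq_one_or _, ?_, ?_, ?_⟩
  · have hsplit :
        {v ∈ range (2 * M) | (v < 4 * a ∧ v % 4 < 2) ∨ (4 * a ≤ v ∧ v < M + 2 * a)} =
          {v ∈ range (4 * a) | v % 4 < 2} ∪ Ico (4 * a) (M + 2 * a) := by
      ext v; simp only [mem_filter, mem_range, mem_union, mem_Ico]; omega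
    have hperiodic : Periodic (fun v => v % 4 < 2) 4 := by simp [Periodic]
    rw [ncard_configOfPred_eq_one, hsplit,
      card_union_of_disjoint
        (disjoint_left.mpr (by simp only [mem_filter, mem_range, mem_Ico]; omega)),
      Nat.card_filter_range_mul_of_periodic hperiodic, Nat.card_Ico,
      show #{v ∈ range 4 | v % 4 < 2} = 2 from rfl]
    omega
  · have hperiodic : Periodic (fun v => v % 2 = 1) 2 := by simp [Periodic]
    rw [ncard_interfaces_configOfPred]
    calc _ = #(insert (2 * M - 1) (insert (M + 2 * a - 1)
          {v ∈ range (2 * (2 * a)) | v % 2 = 1})) := by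
          congr 1; ext v; simp only [mem_filter, mem_range, mem_insert]; split_ifs <;> omega
      _ = 2 * a + 2 := by
          rw [card_insert_of_notMem (by simp only [mem_insert, mem_filter, mem_range]; omega),
            card_insert_of_notMem (by simp only [mem_filter, mem_range]; omega),
            Nat.card_filter_range_mul_of_periodic hperiodic,
            show #{v ∈ range 2 | v % 2 = 1} = 1 from rfl, mul_one]
  · rintro ⟨i, hi⟩
    rw [isIsolated_configOfPred_iff] at hi
    have := i.val_lt
    split_ifs at hi <;> omega

theorem stmt_8 (N M : ℕ) (hNM : N = 2 * M) (hM : 4 ≤ M)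
    (σ : ZMod N → ℤ) (hσ : ∀ i, σ i = 1 ∨ σ i = -1)
    (hcard : {i : ZMod N | σ i = 1}.ncard = M) :
    Even {i : ZMod N | σ i ≠ σ (i + 1)}.ncard ∧
    ({i : ZMod N | σ i ≠ σ (i + 1)}.ncard = 2 →
      ∃ j : ZMod N, ∀ i : ZMod N, σ i = 1 ↔ ∃ t : ℕ, t < M ∧ i = j + (t : ZMod N)) ∧
    (M < {i : ZMod N | σ i ≠ σ (i + 1)}.ncard →
      ∃ i : ZMod N, σ (i - 1) ≠ σ i ∧ σ i ≠ σ (i + 1)) ∧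
    (∀ p : ℕ, Even p → 4 ≤ p → p ≤ M →
      (∃ σ' : ZMod N → ℤ, (∀ i, σ' i = 1 ∨ σ' i = -1) ∧
        {i : ZMod N | σ' i = 1}.ncard = M ∧
        {i : ZMod N | σ' i ≠ σ' (i + 1)}.ncard = p ∧
        ∃ i : ZMod N, σ' (i - 1) ≠ σ' i ∧ σ' i ≠ σ' (i + 1)) ∧
      (∃ σ' : ZMod N → ℤ, (∀ i, σ' i = 1 ∨ σ' i = -1) ∧
        {i : ZMod N | σ' i = 1}.ncard = M ∧
        {i : ZMod N | σ' i ≠ σ' (i + 1)}.ncard = p ∧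
        ¬∃ i : ZMod N, σ' (i - 1) ≠ σ' i ∧ σ' i ≠ σ' (i + 1))) := by
  subst hNM
  have : NeZero (2 * M) := ⟨by omega⟩
  refine ⟨even_ncard_setOf_ne_comp_perm σ hσ (Equiv.addRight 1),
    fun h2 => ZMod.exists_cluster_of_ncard_interfaces_eq_two (by omega) (by omega) hcard h2,
    fun hlt => ?_,
    fun p hp hp4 hpM => ⟨exists_config_with_isolated_site hp hp4 hpM,
      exists_config_without_isolated_site hp hp4 hpM⟩⟩
  by_contra hnone
  have hle := two_mul_ncard_interfaces_le σ fun i hi => hnone ⟨i, hi⟩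
  rw [Nat.card_zmod] at hle
  change M < (interfaces σ).ncard at hlt
  omega
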